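/- Let u, v, p, q, r be real numbers, all greater than 1, such that 1/u + 1/v = 1 and 1/(u(p − 1)) + 1/(v(q − 1)) = 1/(r − 1); write p' = p/(p − 1), q' = q/(q − 1), r' = r/(r − 1), and set α = q'/(v √(p' q' r')), β = r'/√(p' q' r'), γ = p'/(u √(p' q' r')). Let s, t > 0 and define f(x) = (p s)^{1/(2p)} e^{−s x²/2} and g(x) = (q t)^{1/(2q)} e^{−t x²/2} (so that ‖f‖_{L^p(d_N)} = ‖g‖_{L^q(d_N)} = 1). Then { ∫_ℝ [ ∫_ℝ f(x − y) g(y) exp( −(1/(2 p' q' r')) ((q'/v) x − r' y)² ) d_N y ]^r d_N x }^{1/r} = [ (p^{1/p} q^{1/q} / r^{1/r}) · s^{1/p} t^{1/q} / ( (s + t + β²)^{1/r'} (γ² s + α² t + s t)^{1/r} ) ]^{1/2}. -/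

import Mathlib

open MeasureTheory Real

/-- The normalized Lebesgue measure `d_N x = (2π)^(−1/2) dx` on `ℝ`. -/
noncomputable def normalizedLebesgueR : Measure ℝ :=
  ENNReal.ofReal ((2 * Real.pi) ^ (-(1 : ℝ) / 2)) • (volume : Measure ℝ)

/-!
Since `p'/u + q'/v = r'`, we have `γ = β - α`, and the weight is `exp (-(α x - β y)² / 2)`.
Completing the square in `y`, the inner integrand is a Gaussian in `y` of precision
`A = s + t + β²` times `exp (-(E / A) x² / 2)`, where `E = γ² s + α² t + s t`. So the inner integral
is a centred Gaussian in `x`, its `r`-th power is again one, and the outer integral is explicit.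
-/

theorem integral_normalizedLebesgueR (f : ℝ → ℝ) :
    ∫ x, f x ∂normalizedLebesgueR = (√(2 * π))⁻¹ * ∫ x, f x := by
  rw [normalizedLebesgueR, integral_smul_measure, ENNReal.toReal_ofReal (by positivity),
    smul_eq_mul, neg_div, rpow_neg (by positivity), sqrt_eq_rpow]

theorem integral_gaussian_normalizedLebesgueR {a : ℝ} (ha : 0 < a) (c : ℝ) :
    ∫ y, exp (-(a / 2) * (y - c) ^ 2) ∂normalizedLebesgueR = (√a)⁻¹ := by
  rw [integral_normalizedLebesgueR, integral_sub_right_eq_self (fun y ↦ exp (-(a / 2) * y ^ 2)),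
    integral_gaussian, show π / (a / 2) = 2 * π / a by ring, sqrt_div (by positivity)]
  have : √(2 * π) ≠ 0 := by positivity
  field_simp

theorem conj_div_add_conj_div_eq {u v p q r : ℝ} (hu : u ≠ 0) (hv : v ≠ 0) (hp : p ≠ 1)
    (hq : q ≠ 1) (hr : r ≠ 1) (huv : 1 / u + 1 / v = 1)
    (hcond : 1 / (u * (p - 1)) + 1 / (v * (q - 1)) = 1 / (r - 1)) :
    p / (p - 1) / u + q / (q - 1) / v = r / (r - 1) := by
  have conj_div : ∀ {k w : ℝ}, w ≠ 0 → k ≠ 1 → k / (k - 1) / w = 1 / w + 1 / (w * (k - 1)) :=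
    fun hw hk ↦ by field_simp [sub_ne_zero.2 hk]; ring
  have hr' : r / (r - 1) = 1 + 1 / (r - 1) := by simpa using conj_div one_ne_zero hr
  rw [conj_div hu hp, conj_div hv hq, hr']
  linarith

theorem sq_add_sq_add_sq_eq_complete_square (s t α β x y : ℝ) (hA : s + t + β ^ 2 ≠ 0) :
    s * (x - y) ^ 2 + t * y ^ 2 + (α * x - β * y) ^ 2
      = (s + t + β ^ 2) * (y - (s + α * β) * x / (s + t + β ^ 2)) ^ 2
        + ((β - α) ^ 2 * s + α ^ 2 * t + s * t) / (s + t + β ^ 2) * x ^ 2 := by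
  field_simp
  ring

theorem integral_weighted_gaussian_convolution_normalizedLebesgueR {s t : ℝ} (hs : 0 < s)
    (ht : 0 < t) (α β a b x : ℝ) :
    ∫ y, a * exp (-s * (x - y) ^ 2 / 2) * (b * exp (-t * y ^ 2 / 2))
        * exp (-(α * x - β * y) ^ 2 / 2) ∂normalizedLebesgueR
      = a * b * (√(s + t + β ^ 2))⁻¹
        * exp (-(((β - α) ^ 2 * s + α ^ 2 * t + s * t) / (s + t + β ^ 2)) * x ^ 2 / 2) := by
  have hA : 0 < s + t + β ^ 2 := by positivity
  have integrand_eq : ∀ y, a * exp (-s * (x - y) ^ 2 / 2) * (b * exp (-t * y ^ 2 / 2))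
        * exp (-(α * x - β * y) ^ 2 / 2)
      = a * b * exp (-(((β - α) ^ 2 * s + α ^ 2 * t + s * t) / (s + t + β ^ 2)) * x ^ 2 / 2)
        * exp (-((s + t + β ^ 2) / 2) * (y - (s + α * β) * x / (s + t + β ^ 2)) ^ 2) := by
    intro y
    rw [mul_assoc (a * b), ← exp_add, mul_mul_mul_comm, mul_assoc, ← exp_add, ← exp_add]
    congr 2
    linear_combination (-1 / 2 : ℝ) * sq_add_sq_add_sq_eq_complete_square s t α β x y hA.ne'
  simp_rw [integrand_eq]
  rw [integral_const_mul, integral_gaussian_normalizedLebesgueR hA]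
  ring

theorem integral_rpow_gaussian_normalizedLebesgueR {K b r : ℝ} (hK : 0 ≤ K) (hb : 0 < b)
    (hr : 0 < r) :
    ∫ x, (K * exp (-b * x ^ 2 / 2)) ^ r ∂normalizedLebesgueR = K ^ r * (√(r * b))⁻¹ := by
  have integrand_eq : ∀ x, (K * exp (-b * x ^ 2 / 2)) ^ r
      = K ^ r * exp (-(r * b / 2) * (x - 0) ^ 2) := by
    intro x
    rw [mul_rpow hK (exp_pos _).le, ← exp_mul]
    ring_nf
  simp_rw [integrand_eq]
  rw [integral_const_mul, integral_gaussian_normalizedLebesgueR (by positivity)]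

theorem gaussian_trial_constant_eq {p q r s t A E : ℝ} (hp : 0 < p) (hq : 0 < q) (hr : 0 < r)
    (hs : 0 < s) (ht : 0 < t) (hA : 0 < A) (hE : 0 < E) :
    (((p * s) ^ (1 / (2 * p)) * (q * t) ^ (1 / (2 * q)) * (√A)⁻¹) ^ r * (√(r * (E / A)))⁻¹)
        ^ (1 / r)
      = ((p ^ (1 / p) * q ^ (1 / q) / r ^ (1 / r))
        * (s ^ (1 / p) * t ^ (1 / q) / (A ^ (1 - 1 / r) * E ^ (1 / r)))) ^ ((1 : ℝ) / 2) := by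
  refine log_injOn_pos (Set.mem_Ioi.2 (by positivity)) (Set.mem_Ioi.2 (by positivity)) ?_
  simp (disch := positivity) only [log_mul, log_div, log_rpow, log_inv, log_sqrt]
  field_simp
  ring

theorem gaussian_trial_function_computation
    (u v p q r : ℝ)
    (hu : 1 < u) (hv : 1 < v) (hp : 1 < p) (hq : 1 < q) (hr : 1 < r)
    (huv : 1 / u + 1 / v = 1)
    (hcond : 1 / (u * (p - 1)) + 1 / (v * (q - 1)) = 1 / (r - 1))
    (p' q' r' : ℝ) (hp' : p' = p / (p - 1)) (hq' : q' = q / (q - 1)) (hr' : r' = r / (r - 1))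
    (α β γ : ℝ)
    (hα : α = q' / (v * Real.sqrt (p' * q' * r')))
    (hβ : β = r' / Real.sqrt (p' * q' * r'))
    (hγ : γ = p' / (u * Real.sqrt (p' * q' * r')))
    (s t : ℝ) (hs : 0 < s) (ht : 0 < t)
    (f g : ℝ → ℝ)
    (hf : ∀ x, f x = (p * s) ^ (1 / (2 * p)) * Real.exp (-s * x ^ 2 / 2))
    (hg : ∀ x, g x = (q * t) ^ (1 / (2 * q)) * Real.exp (-t * x ^ 2 / 2)) :
    (∫ x, (∫ y, f (x - y) * g y
          * Real.exp (-(1 / (2 * p' * q' * r')) * ((q' / v) * x - r' * y) ^ 2)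
          ∂normalizedLebesgueR) ^ r ∂normalizedLebesgueR) ^ (1 / r)
    = ((p ^ (1 / p) * q ^ (1 / q) / r ^ (1 / r))
        * (s ^ (1 / p) * t ^ (1 / q)
          / ((s + t + β ^ 2) ^ (1 / r')
            * (γ ^ 2 * s + α ^ 2 * t + s * t) ^ (1 / r)))) ^ ((1 : ℝ) / 2) := by
  have hpqr : 0 < p' * q' * r' := by
    rw [hp', hq', hr']
    have := sub_pos.2 hp
    have := sub_pos.2 hq
    have := sub_pos.2 hr
    positivity
  have hsum : p' / u + q' / v = r' := by
    rw [hp', hq', hr']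
    exact conj_div_add_conj_div_eq (by linarith) (by linarith) hp.ne' hq.ne' hr.ne' huv hcond
  have hS : √(p' * q' * r') ≠ 0 := (sqrt_pos.2 hpqr).ne'
  have hγ_eq : γ = β - α := by
    rw [hα, hβ, hγ, ← hsum]
    field_simp
    ring
  have weight_eq : ∀ x y, -(1 / (2 * p' * q' * r')) * ((q' / v) * x - r' * y) ^ 2
      = -(α * x - β * y) ^ 2 / 2 := by
    intro x y
    have : α * x - β * y = ((q' / v) * x - r' * y) / √(p' * q' * r') := by
      rw [hα, hβ]
      field_simp
    rw [this, div_pow, sq_sqrt hpqr.le]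
    ring
  have hA : 0 < s + t + β ^ 2 := by positivity
  have hE : 0 < γ ^ 2 * s + α ^ 2 * t + s * t := by positivity
  have hr'_inv : 1 / r' = 1 - 1 / r := by
    rw [hr']
    field_simp
  simp_rw [hf, hg, weight_eq, integral_weighted_gaussian_convolution_normalizedLebesgueR hs ht,
    ← hγ_eq]
  rw [integral_rpow_gaussian_normalizedLebesgueR (by positivity) (div_pos hE hA) (by positivity),
    hr'_inv]
  exact gaussian_trial_constant_eq (by positivity) (by positivity) (by positivity) hs ht hA hE
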